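/- arXiv:1811.05558 — 2 statements merged into one kernel-verified Lean document; each statement's English description precedes it below -/
import Mathlib

section
/- For every m ≥ 1 and λ ∈ ℂ, the determinant of (L_m^T(λ))* · L_m^T(λ) equals 1 + |λ|² + |λ|⁴ + ... + |λ|^{2m}, where (·)* denotes conjugate transpose. In particular it is always strictly positive. -/
open Matrix

/-- The transposed Kronecker block `L_m^T(λ)`: the `(m+1) × m` matrix with `λ` on the
main diagonal and `1` on the subdiagonal. -/
def LmT (m : ℕ) (lam : ℂ) : Matrix (Fin (m + 1)) (Fin m) ℂ :=
  Matrix.of fun i j => if (i : ℕ) = (j : ℕ) then lam else if (i : ℕ) = (j : ℕ) + 1 then 1 else 0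

/-!
Deleting the first row of `L_m^T(λ)` leaves a unit upper triangular matrix `C`, and the deleted
row is `z C` for `z i = -(-λ)^(i+1)`. Hence `L^* L = C^* C + (zC)^*(zC) = C^* (1 + z^* z) C`, and by
the matrix determinant lemma its determinant is `|det C|² (1 + ‖z‖²) = 1 + Σ_{i<m} |λ|^(2(i+1))`.
-/

namespace Matrix

theorem conjTranspose_mul_self_eq_vecMulVec_add {R ι : Type*} [Semiring R] [StarRing R]
    [Fintype ι] {n : ℕ} (A : Matrix (Fin (n + 1)) ι R) :
    Aᴴ * A =
      vecMulVec (star (A 0)) (A 0) + (A.submatrix Fin.succ id)ᴴ * A.submatrix Fin.succ id := by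
  ext i j
  simp [mul_apply, Fin.sum_univ_succ, vecMulVec_apply]

theorem det_conjTranspose_mul_self_of_vecMul_eq {R : Type*} [CommRing R] [StarRing R] {n : ℕ}
    (A : Matrix (Fin (n + 1)) (Fin n) R) (z : Fin n → R)
    (h : z ᵥ* A.submatrix Fin.succ id = A 0) :
    (Aᴴ * A).det = star (A.submatrix Fin.succ id).det * (A.submatrix Fin.succ id).det *
      (1 + z ⬝ᵥ star z) := by
  set C := A.submatrix Fin.succ id
  have hfactor : Aᴴ * A = Cᴴ * (1 + vecMulVec (star z) z) * C := by
    rw [conjTranspose_mul_self_eq_vecMulVec_add, ← h, star_vecMul, Matrix.mul_add, Matrix.add_mul,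
      Matrix.mul_one, Matrix.mul_assoc, vecMulVec_mul, mul_vecMulVec, add_comm]
  rw [hfactor, det_mul, det_mul, det_conjTranspose, vecMulVec_eq Unit,
    det_one_add_replicateCol_mul_replicateRow]
  ring

end Matrix

theorem LmT_succ_apply (m : ℕ) (lam : ℂ) (i j : Fin m) :
    LmT m lam i.succ j = if (i : ℕ) + 1 = j then lam else if (i : ℕ) = j then 1 else 0 := by
  simp [LmT]

theorem isUpperTriangular_submatrix_succ_LmT (m : ℕ) (lam : ℂ) :
    ((LmT m lam).submatrix Fin.succ id).IsUpperTriangular := by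
  intro i j hji
  simp only [submatrix_apply, id, LmT_succ_apply]
  rw [if_neg (by simp at hji; omega), if_neg (by simp at hji; omega)]

theorem det_submatrix_succ_LmT (m : ℕ) (lam : ℂ) :
    ((LmT m lam).submatrix Fin.succ id).det = 1 := by
  rw [det_of_isUpperTriangular (isUpperTriangular_submatrix_succ_LmT m lam)]
  simp [LmT_succ_apply]

theorem vecMul_submatrix_succ_LmT (m : ℕ) (lam : ℂ) :
    (fun i : Fin m => -(-lam) ^ ((i : ℕ) + 1)) ᵥ* (LmT m lam).submatrix Fin.succ id =
      LmT m lam 0 := by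
  ext j
  obtain ⟨j, hj⟩ := j
  simp only [vecMul, dotProduct, submatrix_apply, id, LmT_succ_apply]
  rw [Fin.sum_univ_eq_sum_range (fun i => -(-lam) ^ (i + 1) *
    if i + 1 = j then lam else if i = j then 1 else 0)]
  cases j with
  | zero =>
    rw [Finset.sum_eq_single 0 (fun i _ hi => by simp [hi]) (by simp; omega)]
    simp [LmT]
  | succ k =>
    rw [Finset.sum_eq_add_of_mem k (k + 1) (by simp; omega) (by simpa using hj) (by omega)
      (fun i _ hi => by simp [hi.1, hi.2])]
    simp [LmT]
    ring

theorem det_conjTranspose_mul_LmT_general (m : ℕ) (lam : ℂ) :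
    ((LmT m lam)ᴴ * LmT m lam).det =
      ((∑ k ∈ Finset.range (m + 1), ‖lam‖ ^ (2 * k) : ℝ) : ℂ) ∧
    0 < (∑ k ∈ Finset.range (m + 1), ‖lam‖ ^ (2 * k) : ℝ) := by
  set z : Fin m → ℂ := fun i => -(-lam) ^ ((i : ℕ) + 1)
  have hz : z ⬝ᵥ star z = ∑ i ∈ Finset.range m, ((‖lam‖ ^ (2 * (i + 1)) : ℝ) : ℂ) := by
    rw [dotProduct, ← Fin.sum_univ_eq_sum_range]
    refine Finset.sum_congr rfl fun i _ => ?_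
    rw [Pi.star_apply, Complex.star_def, Complex.mul_conj', norm_neg, norm_pow, norm_neg,
      mul_comm 2, pow_mul]
    push_cast
    rfl
  refine ⟨?_, ?_⟩
  · rw [det_conjTranspose_mul_self_of_vecMul_eq _ z (vecMul_submatrix_succ_LmT m lam),
      det_submatrix_succ_LmT, star_one, hz, Finset.sum_range_succ' _ m]
    push_cast
    ring
  · simpa only [pow_mul] using geom_sum_pos (sq_nonneg ‖lam‖) m.succ_ne_zero

theorem det_conjTranspose_mul_LmT (m : ℕ) (hm : 1 ≤ m) (lam : ℂ) :
    ((LmT m lam)ᴴ * LmT m lam).det =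
      ((∑ k ∈ Finset.range (m + 1), ‖lam‖ ^ (2 * k) : ℝ) : ℂ) ∧
    0 < (∑ k ∈ Finset.range (m + 1), ‖lam‖ ^ (2 * k) : ℝ) :=
  det_conjTranspose_mul_LmT_general m lam
end

section
/- Smallest singular value of L_m^T(λ) is uniformly bounded below: for every m ≥ 1 there exists c > 0 such that for all λ ∈ ℂ and all v ∈ ℂ^m, ‖L_m^T(λ) v‖ ≥ c ‖v‖. -/
/-!
`L_m^T(λ) v` is the coefficient vector of `(λ + X) · (v₀ + v₁ X + ⋯ + v_{m-1} X^{m-1})`, so with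
`z = L_m^T(λ) v` and `v_{-1} = v_m = 0` the rows read `z_k = λ v_k + v_{k-1}`. If `|λ| ≥ 1` this
recurrence is solved forwards, `|v_k| ≤ |z_k| + |v_{k-1}|`; if `|λ| < 1` it is solved backwards
from `v_m = 0`, `|v_{k-1}| ≤ |z_k| + |v_k|`. Either way every `|v_k|` is at most `∑ |z_i|`, which
bounds `‖v‖` by `(m + 1)² ‖z‖` independently of `λ`.
-/

open Matrix

open Finset

lemma EuclideanSpace.norm_le_sum_norm {𝕜 ι : Type*} [RCLike 𝕜] [Fintype ι]
    (x : EuclideanSpace 𝕜 ι) : ‖x‖ ≤ ∑ i, ‖x i‖ :=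
  calc ‖x‖ = √(∑ i, ‖x i‖ ^ 2) := EuclideanSpace.norm_eq x
    _ ≤ √((∑ i, ‖x i‖) ^ 2) :=
      Real.sqrt_le_sqrt (sum_sq_le_sq_sum_of_nonneg fun _ _ => norm_nonneg _)
    _ = ∑ i, ‖x i‖ := Real.sqrt_sq (sum_nonneg fun _ _ => norm_nonneg _)

lemma le_sum_range_succ_of_sub_le {a b : ℕ → ℝ} (h0 : a 0 ≤ b 0)
    (h : ∀ k, a (k + 1) - a k ≤ b (k + 1)) (n : ℕ) : a n ≤ ∑ i ∈ range (n + 1), b i := by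
  induction n with
  | zero => simpa
  | succ n ih => rw [sum_range_succ]; linarith [h n]

lemma le_sum_Ico_of_sub_le {a b : ℕ → ℝ} {k N : ℕ} (hN : a N = 0)
    (h : ∀ i, a i - a (i + 1) ≤ b i) (hk : k ≤ N) : a k ≤ ∑ i ∈ Ico k N, b i := by
  have htel := sum_Ico_sub a hk
  have hle := sum_le_sum fun i (_ : i ∈ Ico k N) => h i
  rw [sum_sub_distrib] at htel hle
  linarith

lemma norm_le_sum_norm_of_recurrence {𝕜 : Type*} [NormedField 𝕜] {x z : ℕ → 𝕜} {lam : 𝕜}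
    {m : ℕ} (hxm : x m = 0) (h0 : z 0 = lam * x 0)
    (hsucc : ∀ k, z (k + 1) = lam * x (k + 1) + x k) {k : ℕ} (hk : k < m) :
    ‖x k‖ ≤ ∑ i ∈ range (m + 1), ‖z i‖ := by
  rcases le_or_gt 1 ‖lam‖ with hlam | hlam
  · have hz0 : ‖x 0‖ ≤ ‖z 0‖ := by
      rw [h0, norm_mul]
      exact le_mul_of_one_le_left (norm_nonneg _) hlam
    have hstep : ∀ i, ‖x (i + 1)‖ - ‖x i‖ ≤ ‖z (i + 1)‖ := fun i =>
      calc ‖x (i + 1)‖ - ‖x i‖ ≤ ‖lam * x (i + 1)‖ - ‖x i‖ := by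
            rw [norm_mul]; gcongr; exact le_mul_of_one_le_left (norm_nonneg _) hlam
        _ = ‖z (i + 1) - x i‖ - ‖x i‖ := by rw [hsucc]; ring_nf
        _ ≤ ‖z (i + 1)‖ := by linarith [norm_sub_le (z (i + 1)) (x i)]
    calc ‖x k‖ ≤ ∑ i ∈ range (k + 1), ‖z i‖ :=
          le_sum_range_succ_of_sub_le (a := fun i => ‖x i‖) hz0 hstep k
      _ ≤ ∑ i ∈ range (m + 1), ‖z i‖ := sum_le_sum_of_subset_of_nonneg
          (range_subset_range.2 (by omega)) fun _ _ _ => norm_nonneg _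
  · have hstep : ∀ i, ‖x i‖ - ‖x (i + 1)‖ ≤ ‖z (i + 1)‖ := fun i =>
      calc ‖x i‖ - ‖x (i + 1)‖ = ‖z (i + 1) - lam * x (i + 1)‖ - ‖x (i + 1)‖ := by
            rw [hsucc]; ring_nf
        _ ≤ ‖z (i + 1)‖ + ‖lam‖ * ‖x (i + 1)‖ - ‖x (i + 1)‖ := by
            grw [norm_sub_le, norm_mul]
        _ ≤ ‖z (i + 1)‖ := by nlinarith [norm_nonneg (x (i + 1))]
    calc ‖x k‖ ≤ ∑ i ∈ Ico k m, ‖z (i + 1)‖ :=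
          le_sum_Ico_of_sub_le (a := fun i => ‖x i‖) (by simp [hxm]) hstep hk.le
      _ ≤ ∑ i ∈ range m, ‖z (i + 1)‖ := sum_le_sum_of_subset_of_nonneg
          (range_eq_Ico m ▸ Ico_subset_Ico_left (Nat.zero_le k)) fun _ _ _ => norm_nonneg _
      _ ≤ ∑ i ∈ range (m + 1), ‖z i‖ := by
          rw [sum_range_succ' _ m]; exact le_add_of_nonneg_right (norm_nonneg _)

def zeroExtend {α : Type*} [Zero α] {n : ℕ} (x : Fin n → α) (k : ℕ) : α :=
  if h : k < n then x ⟨k, h⟩ else 0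

@[simp]
lemma zeroExtend_val {α : Type*} [Zero α] {n : ℕ} (x : Fin n → α) (i : Fin n) :
    zeroExtend x i = x i := by
  simp [zeroExtend]

lemma zeroExtend_of_le {α : Type*} [Zero α] {n k : ℕ} (x : Fin n → α) (h : n ≤ k) :
    zeroExtend x k = 0 := by
  simp [zeroExtend, not_lt.2 h]

lemma zeroExtend_LmT_mulVec (m : ℕ) (lam : ℂ) (v : Fin m → ℂ) (i : ℕ) :
    zeroExtend (LmT m lam *ᵥ v) i = ∑ j ∈ range m, (if i = j then lam * zeroExtend v j else 0) +
      ∑ j ∈ range m, if i = j + 1 then zeroExtend v j else 0 := by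
  rw [← sum_add_distrib]
  by_cases hi : i < m + 1
  · rw [← Fin.sum_univ_eq_sum_range]
    simp only [zeroExtend, hi, dite_true, mulVec, dotProduct, LmT, of_apply, Fin.is_lt]
    refine sum_congr rfl fun j _ => ?_
    split_ifs <;> first | omega | simp
  · rw [zeroExtend_of_le _ (by omega)]
    refine (sum_eq_zero fun j hj => ?_).symm
    rw [mem_range] at hj
    simp [show i ≠ j by omega, show i ≠ j + 1 by omega]

lemma zeroExtend_LmT_mulVec_zero (m : ℕ) (lam : ℂ) (v : Fin m → ℂ) :
    zeroExtend (LmT m lam *ᵥ v) 0 = lam * zeroExtend v 0 := by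
  simp only [zeroExtend_LmT_mulVec, sum_ite_eq, mem_range, Nat.zero_ne_add_one, if_false,
    sum_const_zero, add_zero]
  split_ifs with h <;> simp [zeroExtend, h]

lemma zeroExtend_LmT_mulVec_succ (m : ℕ) (lam : ℂ) (v : Fin m → ℂ) (k : ℕ) :
    zeroExtend (LmT m lam *ᵥ v) (k + 1) = lam * zeroExtend v (k + 1) + zeroExtend v k := by
  simp only [zeroExtend_LmT_mulVec, add_left_inj, sum_ite_eq, mem_range]
  congr 1 <;> split_ifs with h <;> simp [zeroExtend, h]

theorem LmT_uniform_lower_bound_general (m : ℕ) :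
    ∃ c : ℝ, 0 < c ∧ ∀ (lam : ℂ) (v : EuclideanSpace ℂ (Fin m)),
      c * ‖v‖ ≤ ‖Matrix.toEuclideanLin (LmT m lam) v‖ := by
  refine ⟨((m + 1) ^ 2 : ℝ)⁻¹, by positivity, fun lam v => ?_⟩
  set w := toEuclideanLin (LmT m lam) v
  set S := ∑ i ∈ range (m + 1), ‖zeroExtend (LmT m lam *ᵥ v) i‖ with hS_def
  have hS : S ≤ (m + 1) * ‖w‖ :=
    calc S = ∑ i : Fin (m + 1), ‖w i‖ := by rw [hS_def, ← Fin.sum_univ_eq_sum_range]; simp [w]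
      _ ≤ ∑ _i : Fin (m + 1), ‖w‖ := sum_le_sum fun i _ => PiLp.norm_apply_le w i
      _ = (m + 1) * ‖w‖ := by simp
  have hv : ‖v‖ ≤ m * S :=
    calc ‖v‖ ≤ ∑ k, ‖v k‖ := EuclideanSpace.norm_le_sum_norm v
      _ ≤ ∑ _k : Fin m, S := sum_le_sum fun k _ => by
          simpa using norm_le_sum_norm_of_recurrence (zeroExtend_of_le _ le_rfl)
            (zeroExtend_LmT_mulVec_zero m lam v) (zeroExtend_LmT_mulVec_succ m lam v) k.isLt
      _ = m * S := by simp
  rw [inv_mul_le_iff₀ (by positivity)]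
  calc ‖v‖ ≤ m * S := hv
    _ ≤ (m + 1) * ((m + 1) * ‖w‖) := by gcongr; linarith
    _ = _ := by ring

/-- The smallest singular value of `L_m^T(λ)` is bounded below uniformly in `λ`. -/
theorem LmT_uniform_lower_bound (m : ℕ) (hm : 1 ≤ m) :
    ∃ c : ℝ, 0 < c ∧ ∀ (lam : ℂ) (v : EuclideanSpace ℂ (Fin m)),
      c * ‖v‖ ≤ ‖Matrix.toEuclideanLin (LmT m lam) v‖ :=
  LmT_uniform_lower_bound_general m
end
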